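/- In any n-player resource allocation model in which every cost function C^r is submodular (C^r(X ∪ {i}) − C^r(X) ≥ C^r(Y ∪ {i}) − C^r(Y) for all X ⊆ Y ⊆ N and i ∈ N \ Y), nonnegative, and satisfies C^r(∅) = 0, every strategy vector Q satisfies C(Q) ≤ Φ(Q), where Φ(Q) = Σ_{r ∈ R} Σ_{∅ ≠ T ⊆ Q^r} ((|Q^r| − |T|)! (|T| − 1)! / |Q^r|!) · C^r(T) is the Shapley potential and C(Q) = Σ_{r ∈ R} C^r(Q^r) is the social cost. -/

import Mathlib

open Finset

def preSet {N : Type*} [DecidableEq N] (S : Finset N)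
    (π : {x // x ∈ S} ≃ Fin S.card) (i : {x // x ∈ S}) : Finset N :=
  (S.attach.filter (fun j => π j < π i)).image Subtype.val

noncomputable def shapley {N : Type*} [DecidableEq N]
    (C : Finset N → ℝ) (S : Finset N) (i : N) : ℝ :=
  if hi : i ∈ S then
    (1 / (Nat.factorial S.card : ℝ)) *
      ∑ π : {x // x ∈ S} ≃ Fin S.card,
        (C (preSet S π ⟨i, hi⟩ ∪ {i}) - C (preSet S π ⟨i, hi⟩))
  else 0

/-- `users P r = P^r = {i : r ∈ P_i}`, the set of players using resource `r`. -/
def users {n : ℕ} {R : Type*} [DecidableEq R]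
    (P : Fin n → Finset R) (r : R) : Finset (Fin n) :=
  Finset.univ.filter (fun i => r ∈ P i)

/-- The private cost of player `i` under Shapley cost sharing:
`C_i(P) = Σ_{r ∈ P_i} φ_i(C^r, P^r)`. -/
noncomputable def privCost {n : ℕ} {R : Type*} [DecidableEq R]
    (Cr : R → Finset (Fin n) → ℝ) (P : Fin n → Finset R) (i : Fin n) : ℝ :=
  ∑ r ∈ P i, shapley (Cr r) (users P r) i

/-- The social cost `C(P) = Σ_{r ∈ R} C^r(P^r)`. -/
noncomputable def socCost {n : ℕ} {R : Type*} [Fintype R] [DecidableEq R]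
    (Cr : R → Finset (Fin n) → ℝ) (P : Fin n → Finset R) : ℝ :=
  ∑ r : R, Cr r (users P r)

/-- The Shapley potential
`Φ(P) = Σ_{r ∈ R} Σ_{∅ ≠ T ⊆ P^r} ((|P^r|-|T|)!(|T|-1)!/|P^r|!) · C^r(T)`. -/
noncomputable def pot {n : ℕ} {R : Type*} [Fintype R] [DecidableEq R]
    (Cr : R → Finset (Fin n) → ℝ) (P : Fin n → Finset R) : ℝ :=
  ∑ r : R, ∑ T ∈ (users P r).powerset.filter (fun T => T.Nonempty),
    ((Nat.factorial ((users P r).card - T.card) : ℝ) *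
        (Nat.factorial (T.card - 1) : ℝ) / (Nat.factorial (users P r).card : ℝ)) *
      Cr r T

/-- `P` is a pure Nash equilibrium of the Shapley cost sharing game. -/
def isPNE {n : ℕ} {R : Type*} [DecidableEq R]
    (Strat : Fin n → Set (Finset R)) (Cr : R → Finset (Fin n) → ℝ)
    (P : Fin n → Finset R) : Prop :=
  (∀ i, P i ∈ Strat i) ∧
    ∀ i, ∀ Q ∈ Strat i, privCost Cr P i ≤ privCost Cr (Function.update P i Q) i

/-- `H_k`, the `k`-th harmonicNum number. -/
noncomputable def harmonicNum (k : ℕ) : ℝ := ∑ l ∈ Finset.Icc 1 k, (1 / (l : ℝ))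

/-!
Fix a resource with submodular cost `C`, `C ∅ = 0`, and users `S`, `|S| = s`. With the Shapley
weights `w(s, t) = (s - t)! (t - 1)! / s!` one has `t · w(s, t) = (s - t) · w(s, t + 1)` for
`0 < t < s` and `s · w(s, s) = 1`, so the weighted sum over `T ⊆ S` of the marginal costs
`Σ_{i ∈ T} (C T - C (T \ {i}))` telescopes to `C S`. Submodularity bounds each such sum of
marginal costs by `C T`, whence `C S ≤ Σ_{T ⊆ S} w(s, |T|) C T`, and summing over resources
gives the theorem.
-/

section ShapleyPotential

open Nat

variable {ι : Type*} [DecidableEq ι]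

def IsSubmodular (C : Finset ι → ℝ) : Prop :=
  ∀ (X Y : Finset ι) (i : ι), X ⊆ Y → i ∉ Y → C (insert i Y) - C Y ≤ C (insert i X) - C X

noncomputable def shapleyWeight (s t : ℕ) : ℝ := (s - t)! * (t - 1)! / s !

noncomputable def shapleyPot (C : Finset ι → ℝ) (S : Finset ι) : ℝ :=
  ∑ T ∈ S.powerset.filter (fun T => T.Nonempty), shapleyWeight S.card T.card * C T

lemma shapleyWeight_nonneg (s t : ℕ) : 0 ≤ shapleyWeight s t := by
  unfold shapleyWeight; positivity

lemma mul_shapleyWeight {s t : ℕ} (ht : 1 ≤ t) :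
    t * shapleyWeight s t = (s - t)! * t ! / s ! := by
  rw [shapleyWeight, ← Nat.mul_factorial_pred (by omega : t ≠ 0)]
  push_cast
  ring

lemma sub_mul_shapleyWeight_succ {s t : ℕ} (hts : t < s) :
    ((s - t : ℕ) : ℝ) * shapleyWeight s (t + 1) = (s - t)! * t ! / s ! := by
  rw [shapleyWeight, Nat.add_sub_cancel, ← Nat.mul_factorial_pred (by omega : s - t ≠ 0),
    show s - t - 1 = s - (t + 1) by omega]
  push_cast
  ring

lemma mul_shapleyWeight_sub_mul_shapleyWeight_succ {s t : ℕ} (ht : 1 ≤ t) (hts : t ≤ s) :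
    t * shapleyWeight s t - ((s - t : ℕ) : ℝ) * shapleyWeight s (t + 1) =
      if t = s then 1 else 0 := by
  split_ifs with h
  · subst h
    rw [mul_shapleyWeight ht, Nat.sub_self, Nat.cast_zero, zero_mul, sub_zero,
      factorial_zero, Nat.cast_one, one_mul, div_self (by positivity)]
  · rw [mul_shapleyWeight ht, sub_mul_shapleyWeight_succ (by omega), sub_self]

lemma sum_powerset_sum_eq_sum_powerset_sum_sdiff {β : Type*} [AddCommMonoid β] (S : Finset ι)
    (f : Finset ι → ι → β) :
    ∑ T ∈ S.powerset, ∑ i ∈ T, f T i = ∑ U ∈ S.powerset, ∑ i ∈ S \ U, f (insert i U) i := by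
  rw [sum_sigma', sum_sigma']
  refine sum_nbij' (fun p => ⟨p.1.erase p.2, p.2⟩) (fun p => ⟨insert p.2 p.1, p.2⟩)
    ?_ ?_ ?_ ?_ ?_
  · rintro ⟨T, i⟩ hp
    simp only [mem_sigma, mem_powerset] at hp ⊢
    exact ⟨(erase_subset i T).trans hp.1, mem_sdiff.2 ⟨hp.1 hp.2, notMem_erase i T⟩⟩
  · rintro ⟨U, i⟩ hp
    simp only [mem_sigma, mem_powerset, mem_sdiff] at hp ⊢
    exact ⟨insert_subset hp.2.1 hp.1, mem_insert_self i U⟩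
  · rintro ⟨T, i⟩ hp
    simp [insert_erase (mem_sigma.1 hp).2]
  · rintro ⟨U, i⟩ hp
    simp [erase_insert (mem_sdiff.1 (mem_sigma.1 hp).2).2]
  · rintro ⟨T, i⟩ hp
    simp [insert_erase (mem_sigma.1 hp).2]

lemma sum_powerset_shapleyWeight_mul_sum_marginal (C : Finset ι → ℝ) (hC0 : C ∅ = 0)
    (S : Finset ι) :
    ∑ T ∈ S.powerset, shapleyWeight S.card T.card * ∑ i ∈ T, (C T - C (T.erase i)) = C S := by
  set w := shapleyWeight S.card
  have hremoved : ∑ T ∈ S.powerset, ∑ i ∈ T, w T.card * C (T.erase i) =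
      ∑ U ∈ S.powerset, ((S.card - U.card : ℕ) : ℝ) * w (U.card + 1) * C U := by
    rw [sum_powerset_sum_eq_sum_powerset_sum_sdiff]
    refine sum_congr rfl fun U hU => ?_
    calc ∑ i ∈ S \ U, w (insert i U).card * C ((insert i U).erase i)
        = ∑ i ∈ S \ U, w (U.card + 1) * C U := sum_congr rfl fun i hi => by
          rw [card_insert_of_notMem (mem_sdiff.1 hi).2, erase_insert (mem_sdiff.1 hi).2]
      _ = ((S.card - U.card : ℕ) : ℝ) * w (U.card + 1) * C U := by
          rw [sum_const, card_sdiff_of_subset (mem_powerset.1 hU), nsmul_eq_mul, mul_assoc]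
  have hcoeff : ∀ U ∈ S.powerset,
      U.card * w U.card * C U - ((S.card - U.card : ℕ) : ℝ) * w (U.card + 1) * C U =
        if U = S then C U else 0 := by
    intro U hU
    obtain rfl | hne := U.eq_empty_or_nonempty
    · simp [hC0]
    have hUS := mem_powerset.1 hU
    rw [← sub_mul, mul_shapleyWeight_sub_mul_shapleyWeight_succ hne.card_pos
      (card_le_card hUS), ite_mul, one_mul, zero_mul]
    exact if_congr ⟨fun h => eq_of_subset_of_card_le hUS h.ge, congrArg card⟩ rfl rfl
  calc ∑ T ∈ S.powerset, w T.card * ∑ i ∈ T, (C T - C (T.erase i))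
      = ∑ T ∈ S.powerset, (T.card * w T.card * C T - ∑ i ∈ T, w T.card * C (T.erase i)) := by
        refine sum_congr rfl fun T _ => ?_
        rw [sum_sub_distrib, sum_const, nsmul_eq_mul, mul_sub, mul_sum]
        ring
    _ = ∑ U ∈ S.powerset, if U = S then C U else 0 := by
        rw [sum_sub_distrib, hremoved, ← sum_sub_distrib]
        exact sum_congr rfl hcoeff
    _ = C S := by simp

namespace IsSubmodular

variable {C : Finset ι → ℝ}

lemma sub_erase_le (hC : IsSubmodular C) {X Y : Finset ι} {i : ι} (hi : i ∈ X) (hXY : X ⊆ Y) :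
    C Y - C (Y.erase i) ≤ C X - C (X.erase i) := by
  simpa only [insert_erase hi, insert_erase (hXY hi)] using
    hC (X.erase i) (Y.erase i) i (erase_subset_erase i hXY) (notMem_erase i Y)

lemma sum_marginal_le (hC : IsSubmodular C) (hC0 : C ∅ = 0) (T : Finset ι) :
    ∑ i ∈ T, (C T - C (T.erase i)) ≤ C T := by
  induction T using Finset.induction_on with
  | empty => simp [hC0]
  | insert j T hj ih =>
    rw [sum_insert hj, erase_insert hj]
    have hmarg : ∑ i ∈ T, (C (insert j T) - C ((insert j T).erase i)) ≤
        ∑ i ∈ T, (C T - C (T.erase i)) :=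
      sum_le_sum fun i hi => hC.sub_erase_le hi (subset_insert j T)
    linarith

lemma le_shapleyPot (hC : IsSubmodular C) (hC0 : C ∅ = 0) (S : Finset ι) :
    C S ≤ shapleyPot C S := by
  have hpot : shapleyPot C S = ∑ T ∈ S.powerset, shapleyWeight S.card T.card * C T :=
    sum_filter_of_ne fun T _ hT =>
      nonempty_iff_ne_empty.2 fun h => hT (by rw [h, hC0, mul_zero])
  calc C S
      = ∑ T ∈ S.powerset, shapleyWeight S.card T.card * ∑ i ∈ T, (C T - C (T.erase i)) :=
        (sum_powerset_shapleyWeight_mul_sum_marginal C hC0 S).symm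
    _ ≤ ∑ T ∈ S.powerset, shapleyWeight S.card T.card * C T :=
        sum_le_sum fun T _ =>
          mul_le_mul_of_nonneg_left (hC.sum_marginal_le hC0 T) (shapleyWeight_nonneg _ _)
    _ = shapleyPot C S := hpot.symm

end IsSubmodular

end ShapleyPotential

theorem socCost_le_pot_of_submodular_general {n : ℕ} {R : Type*} [Fintype R] [DecidableEq R]
    (Cr : R → Finset (Fin n) → ℝ)
    (hC0 : ∀ r, Cr r ∅ = 0)
    (hsub : ∀ r (X Y : Finset (Fin n)) (i : Fin n), X ⊆ Y → i ∉ Y →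
      Cr r (insert i Y) - Cr r Y ≤ Cr r (insert i X) - Cr r X)
    (Q : Fin n → Finset R) :
    socCost Cr Q ≤ pot Cr Q :=
  sum_le_sum fun r _ => IsSubmodular.le_shapleyPot (hsub r) (hC0 r) (users Q r)

/-- For submodular costs, the social cost is at most the Shapley potential. -/
theorem socCost_le_pot_of_submodular {n : ℕ} {R : Type*} [Fintype R] [DecidableEq R]
    (Strat : Fin n → Set (Finset R)) (Cr : R → Finset (Fin n) → ℝ)
    (hC0 : ∀ r, Cr r ∅ = 0)
    (hnn : ∀ r T, 0 ≤ Cr r T)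
    (hsub : ∀ r (X Y : Finset (Fin n)) (i : Fin n), X ⊆ Y → i ∉ Y →
      Cr r (insert i Y) - Cr r Y ≤ Cr r (insert i X) - Cr r X)
    (Q : Fin n → Finset R) (hQ : ∀ i, Q i ∈ Strat i) :
    socCost Cr Q ≤ pot Cr Q :=
  socCost_le_pot_of_submodular_general Cr hC0 hsub Q
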